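/- Let α∈(0,1), θ∈(π/2,π) with αθ<π, κ>0, T>0 and σ∈[0,1]. There exists a constant C>0 such that for every t∈(0,T] and every λ≥0: λ^σ · |(1/(2πi)) ∫_{Γ_{θ,κ}} e^{zt} z^{α−1} (z^α+λ)^{−1} dz| ≤ C t^{−σα}. -/

import Mathlib

open MeasureTheory

/-- The integral `∫_{Γ_{θ,κ}} F(z) dz` over the contour
`Γ_{θ,κ} = {z : |z| = κ, |Arg z| ≤ θ} ∪ {z = re^{±iθ} : r ≥ κ}`, oriented with
increasing imaginary part: the sum of the two ray integrals (the lower ray traversed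
inward, the upper ray outward) and the arc integral. -/
noncomputable def contourIntegral (θ κ : ℝ) (F : ℂ → ℂ) : ℂ :=
  (∫ r in Set.Ioi κ, F ((r : ℂ) * Complex.exp ((θ : ℂ) * Complex.I)) *
      Complex.exp ((θ : ℂ) * Complex.I)) -
  (∫ r in Set.Ioi κ, F ((r : ℂ) * Complex.exp (-(θ : ℂ) * Complex.I)) *
      Complex.exp (-(θ : ℂ) * Complex.I)) +
  ∫ ψ in (-θ)..θ, F ((κ : ℂ) * Complex.exp ((ψ : ℂ) * Complex.I)) *
      (Complex.I * (κ : ℂ) * Complex.exp ((ψ : ℂ) * Complex.I))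

/-!
Write `E(t, λ)` for the contour integral. Since `λ^σ ‖E‖ = (λ ‖E‖)^σ ‖E‖^(1-σ)`, it suffices
to bound `‖E‖` uniformly and `λ ‖E‖` by `C t^(-α)`. Everything rests on the sector estimate
`‖z^α + λ‖ ≥ cos (αθ/2) (‖z‖^α + λ)` for `|arg z| ≤ θ`, `αθ < π`.

For `λ ‖E‖`, each ray contributes at most `∫ r^(α-1) e^(t r cos θ) dr / cos (αθ/2)
≤ Γ(α) (-t cos θ)^(-α) / cos (αθ/2)`, and the arc contributes a constant `≤ C (T/t)^α`.

For `‖E‖` the crude ray bound `∫_κ^∞ e^(t r cos θ) dr / r` grows like `log (1/t)`, so one needs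
cancellation: the integrand is conjugation-symmetric, so the two rays combine to `2i Im` of one
of them. Writing the integrand times `z` as `e^(zt) (1 - λ/(z^α + λ))`, its imaginary part is at
most `t |Im z| e^(t Re z) / cos (αθ/2) + λ ‖z‖^α / (cos (αθ/2) (‖z‖^α + λ))²`, and after dividing
by `r` both terms integrate to bounds independent of `t` and `λ`.
-/

open Real Set Filter
open Complex (I arg)
open scoped ComplexConjugate

theorem cos_half_mul_le_norm_add_ofReal {w : ℂ} {b φ : ℝ} (hb : 0 ≤ b)
    (hw : ‖w‖ * cos φ ≤ w.re) : cos (φ / 2) * (‖w‖ + b) ≤ ‖w + b‖ := by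
  have hc : cos (φ / 2) ^ 2 = (1 + cos φ) / 2 := by
    rw [cos_sq, mul_div_cancel₀ _ two_ne_zero]; ring
  have hsq : (cos (φ / 2) * (‖w‖ + b)) ^ 2 ≤ ‖w + b‖ ^ 2 := by
    have hnorm : ‖w + b‖ ^ 2 = ‖w‖ ^ 2 + b ^ 2 + 2 * b * w.re := by
      rw [Complex.sq_norm, Complex.sq_norm, Complex.normSq_apply, Complex.normSq_apply]
      simp only [Complex.add_re, Complex.add_im, Complex.ofReal_re, Complex.ofReal_im]
      ring
    rw [hnorm, mul_pow, hc]
    nlinarith [sq_nonneg (‖w‖ - b), cos_le_one φ, mul_nonneg hb (norm_nonneg w)]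
  exact (le_abs_self _).trans (abs_le_of_sq_le_sq hsq (norm_nonneg _))

theorem cos_mul_le_re_cpow {z : ℂ} {α θ : ℝ} (hα : 0 ≤ α) (hz : |arg z| ≤ θ)
    (hαθ : α * θ ≤ π) : ‖z‖ ^ α * cos (α * θ) ≤ (z ^ (α : ℂ)).re := by
  rw [Complex.cpow_ofReal_re, ← cos_abs (arg z * α), abs_mul, abs_of_nonneg hα]
  gcongr
  exact cos_le_cos_of_nonneg_of_le_pi (by positivity) hαθ (by nlinarith [abs_nonneg (arg z)])

theorem cos_half_mul_le_norm_cpow_add {z : ℂ} {α θ b : ℝ} (hα : 0 ≤ α) (hb : 0 ≤ b)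
    (hz : |arg z| ≤ θ) (hαθ : α * θ ≤ π) :
    cos (α * θ / 2) * (‖z‖ ^ α + b) ≤ ‖z ^ (α : ℂ) + b‖ := by
  have := cos_half_mul_le_norm_add_ofReal (w := z ^ (α : ℂ)) hb
    (by rw [Complex.norm_cpow_real]; exact cos_mul_le_re_cpow hα hz hαθ)
  rwa [Complex.norm_cpow_real] at this

theorem abs_im_exp_le (z : ℂ) : |(Complex.exp z).im| ≤ Real.exp z.re * |z.im| := by
  rw [Complex.exp_im, abs_mul, abs_of_pos (Real.exp_pos _)]
  exact mul_le_mul_of_nonneg_left abs_sin_le_abs (Real.exp_pos _).le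

theorem abs_im_mul_le (z w : ℂ) : |(z * w).im| ≤ ‖z‖ * |w.im| + |z.im| * ‖w‖ := by
  rw [Complex.mul_im]
  refine (abs_add_le _ _).trans (add_le_add ?_ ?_) <;> rw [abs_mul]
  · exact mul_le_mul_of_nonneg_right (Complex.abs_re_le_norm z) (abs_nonneg _)
  · exact mul_le_mul_of_nonneg_left (Complex.abs_re_le_norm w) (abs_nonneg _)

theorem arg_ofReal_mul_exp_mul_I {r ψ : ℝ} (hr : 0 < r) (hψ : ψ ∈ Ioc (-π) π) :
    arg (r * Complex.exp (ψ * I)) = ψ := by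
  rw [Complex.arg_real_mul _ hr, Complex.exp_mul_I, Complex.arg_cos_add_sin_mul_I hψ]

theorem setIntegral_Ioi_exp_mul_le {a κ : ℝ} (ha : a < 0) (hκ : 0 ≤ κ) :
    ∫ r in Ioi κ, Real.exp (a * r) ≤ (-a)⁻¹ := by
  rw [integral_exp_mul_Ioi ha, neg_div, ← div_neg, div_eq_mul_inv]
  exact mul_le_of_le_one_left (inv_nonneg.2 (neg_nonneg.2 ha.le))
    (Real.exp_le_one_iff.2 (mul_nonpos_of_nonpos_of_nonneg ha.le hκ))

theorem integrableOn_Ioi_rpow_mul_exp_neg_mul {s b : ℝ} (hs : 0 < s) (hb : 0 < b) :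
    IntegrableOn (fun r : ℝ => r ^ (s - 1) * Real.exp (-(b * r))) (Ioi 0) := by
  refine (integrableOn_rpow_mul_exp_neg_mul_rpow (s := s - 1) (by linarith) one_pos hb).congr_fun
    (fun r _ => ?_) measurableSet_Ioi
  simp only [Real.rpow_one, neg_mul]

theorem setIntegral_Ioi_rpow_mul_exp_neg_mul_le {s b κ : ℝ} (hs : 0 < s) (hb : 0 < b)
    (hκ : 0 ≤ κ) : ∫ r in Ioi κ, r ^ (s - 1) * Real.exp (-(b * r)) ≤ (1 / b) ^ s * Gamma s := by
  rw [← integral_rpow_mul_exp_neg_mul_Ioi hs hb]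
  refine setIntegral_mono_set (integrableOn_Ioi_rpow_mul_exp_neg_mul hs hb) ?_
    (Ioi_subset_Ioi hκ).eventuallyLE
  filter_upwards [ae_restrict_mem measurableSet_Ioi] with r (hr : 0 < r)
  positivity

theorem hasDerivAt_neg_div_mul_inv_rpow_add {α lam r : ℝ} (hα : 0 < α) (hlam : 0 ≤ lam)
    (hr : 0 < r) :
    HasDerivAt (fun x : ℝ => -(lam / α) * (x ^ α + lam)⁻¹)
      (lam * r ^ (α - 1) / (r ^ α + lam) ^ 2) r := by
  have hpow : HasDerivAt (fun x : ℝ => x ^ α + lam) (α * r ^ (α - 1)) r := by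
    simpa using (Real.hasDerivAt_rpow_const (p := α) (Or.inl hr.ne')).add_const lam
  refine ((hpow.inv (by positivity)).const_mul (-(lam / α))).congr_deriv ?_
  field_simp

theorem tendsto_neg_div_mul_inv_rpow_add {α lam : ℝ} (hα : 0 < α) :
    Tendsto (fun x : ℝ => -(lam / α) * (x ^ α + lam)⁻¹) atTop (nhds 0) := by
  simpa using ((tendsto_rpow_atTop hα).atTop_add tendsto_const_nhds).inv_tendsto_atTop.const_mul
    (-(lam / α))

theorem integrableOn_Ioi_mul_rpow_div_rpow_add_sq {α lam κ : ℝ} (hα : 0 < α) (hlam : 0 ≤ lam)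
    (hκ : 0 < κ) :
    IntegrableOn (fun r : ℝ => lam * r ^ (α - 1) / (r ^ α + lam) ^ 2) (Ioi κ) :=
  integrableOn_Ioi_deriv_of_nonneg'
    (fun r hr => hasDerivAt_neg_div_mul_inv_rpow_add hα hlam (hκ.trans_le hr))
    (fun r hr => by have : 0 < r := hκ.trans hr; positivity)
    (tendsto_neg_div_mul_inv_rpow_add hα)

theorem setIntegral_Ioi_mul_rpow_div_rpow_add_sq_le {α lam κ : ℝ} (hα : 0 < α) (hlam : 0 ≤ lam)
    (hκ : 0 < κ) :
    ∫ r in Ioi κ, lam * r ^ (α - 1) / (r ^ α + lam) ^ 2 ≤ α⁻¹ := by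
  rw [integral_Ioi_of_hasDerivAt_of_nonneg'
    (fun r hr => hasDerivAt_neg_div_mul_inv_rpow_add hα hlam (hκ.trans_le hr))
    (fun r hr => by have : 0 < r := hκ.trans hr; positivity)
    (tendsto_neg_div_mul_inv_rpow_add hα)]
  have hfrac : lam / (κ ^ α + lam) ≤ 1 :=
    div_le_one_of_le₀ (le_add_of_nonneg_left (by positivity)) (by positivity)
  calc 0 - -(lam / α) * (κ ^ α + lam)⁻¹ = lam / (κ ^ α + lam) * α⁻¹ := by ring
    _ ≤ α⁻¹ := mul_le_of_le_one_left (by positivity) hfrac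

theorem abs_im_integral_le {X : Type*} [MeasurableSpace X] {μ : Measure X} {f : X → ℂ}
    {g : X → ℝ} (hg : Integrable g μ) (hfg : ∀ᵐ x ∂μ, |(f x).im| ≤ g x) :
    |(∫ x, f x ∂μ).im| ≤ ∫ x, g x ∂μ := by
  by_cases hf : Integrable f μ
  · rw [show (∫ x, f x ∂μ).im = ∫ x, (f x).im ∂μ from (integral_im hf).symm]
    exact norm_integral_le_of_norm_le (f := fun x => (f x).im) hg hfg
  · rw [integral_undef hf, Complex.zero_im, abs_zero]
    exact integral_nonneg_of_ae (hfg.mono fun x hx => (abs_nonneg _).trans hx)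

noncomputable def rayIntegral (φ κ : ℝ) (F : ℂ → ℂ) : ℂ :=
  ∫ r in Ioi κ, F (r * Complex.exp (φ * I)) * Complex.exp (φ * I)

noncomputable def arcIntegral (θ κ : ℝ) (F : ℂ → ℂ) : ℂ :=
  ∫ ψ in (-θ)..θ, F (κ * Complex.exp (ψ * I)) * (I * κ * Complex.exp (ψ * I))

theorem contourIntegral_eq_rayIntegral_sub_add_arcIntegral (θ κ : ℝ) (F : ℂ → ℂ) :
    contourIntegral θ κ F = rayIntegral θ κ F - rayIntegral (-θ) κ F + arcIntegral θ κ F := by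
  simp only [contourIntegral, rayIntegral, arcIntegral, Complex.ofReal_neg]

theorem rayIntegral_neg_of_conj {φ κ : ℝ} {F : ℂ → ℂ}
    (hF : ∀ r > κ, F (conj (r * Complex.exp (φ * I))) = conj (F (r * Complex.exp (φ * I)))) :
    rayIntegral (-φ) κ F = conj (rayIntegral φ κ F) := by
  have hexp : conj (Complex.exp (φ * I)) = Complex.exp ((-φ : ℝ) * I) := by
    rw [← Complex.exp_conj, map_mul, Complex.conj_ofReal, Complex.conj_I, Complex.ofReal_neg,
      mul_neg, neg_mul]
  rw [rayIntegral, rayIntegral, ← integral_conj]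
  refine setIntegral_congr_fun measurableSet_Ioi fun r hr => ?_
  have hz : conj (r * Complex.exp (φ * I)) = r * Complex.exp ((-φ : ℝ) * I) := by
    rw [map_mul, Complex.conj_ofReal, hexp]
  rw [map_mul, ← hF r hr, hz, hexp]

theorem im_mul_inv_add_ofReal (w : ℂ) (b : ℝ) :
    (w * (w + b)⁻¹).im = b * w.im / Complex.normSq (w + b) := by
  simp only [Complex.mul_im, Complex.inv_re, Complex.inv_im, Complex.add_re, Complex.add_im,
    Complex.ofReal_re, Complex.ofReal_im, add_zero]
  ring

/-- `(2πi)⁻¹ ∫_{Γ_{θ,κ}}` of this integrand is the Mittag-Leffler function `E_α(-λ t^α)`. -/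
noncomputable def mittagLefflerIntegrand (α t lam : ℝ) (z : ℂ) : ℂ :=
  Complex.exp (z * t) * z ^ ((α : ℂ) - 1) * (z ^ (α : ℂ) + lam)⁻¹

section MittagLefflerIntegrand

variable {α t lam : ℝ} {z : ℂ}

theorem mittagLefflerIntegrand_mul_self (hz : z ≠ 0) :
    mittagLefflerIntegrand α t lam z * z =
      Complex.exp (z * t) * (z ^ (α : ℂ) * (z ^ (α : ℂ) + lam)⁻¹) := by
  rw [mittagLefflerIntegrand, Complex.cpow_sub _ _ hz, Complex.cpow_one]
  field_simp

theorem mittagLefflerIntegrand_conj (hz : arg z ≠ π) :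
    mittagLefflerIntegrand α t lam (conj z) = conj (mittagLefflerIntegrand α t lam z) := by
  simp only [mittagLefflerIntegrand, map_mul, map_inv₀, map_add, map_sub, map_one,
    ← Complex.exp_conj, Complex.conj_cpow _ _ hz, Complex.conj_ofReal]

end MittagLefflerIntegrand

section Sector

variable {α θ t lam : ℝ} {z : ℂ}

theorem cos_mul_div_two_pos (hα : 0 ≤ α) (hθ : 0 ≤ θ) (hαθ : α * θ < π) :
    0 < cos (α * θ / 2) := by
  have : 0 ≤ α * θ := mul_nonneg hα hθ
  exact cos_pos_of_mem_Ioo ⟨by linarith [pi_pos], by linarith⟩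

theorem norm_cpow_mul_inv_cpow_add_le (hα : 0 ≤ α) (hlam : 0 ≤ lam) (hz : z ≠ 0)
    (harg : |arg z| ≤ θ) (hαθ : α * θ < π) :
    ‖z ^ (α : ℂ) * (z ^ (α : ℂ) + lam)⁻¹‖ ≤ ‖z‖ ^ α / (cos (α * θ / 2) * (‖z‖ ^ α + lam)) := by
  have hc := cos_mul_div_two_pos hα ((abs_nonneg _).trans harg) hαθ
  have : 0 < ‖z‖ ^ α := by positivity
  rw [norm_mul, norm_inv, Complex.norm_cpow_real, div_eq_mul_inv]
  gcongr
  exact cos_half_mul_le_norm_cpow_add hα hlam harg hαθ.le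

theorem norm_mittagLefflerIntegrand_mul_self_le (hα : 0 ≤ α) (hlam : 0 ≤ lam) (hz : z ≠ 0)
    (harg : |arg z| ≤ θ) (hαθ : α * θ < π) :
    ‖mittagLefflerIntegrand α t lam z * z‖ ≤
      Real.exp (t * z.re) * (‖z‖ ^ α / (cos (α * θ / 2) * (‖z‖ ^ α + lam))) := by
  rw [mittagLefflerIntegrand_mul_self hz, norm_mul, Complex.norm_exp, Complex.re_mul_ofReal,
    mul_comm z.re]
  gcongr
  exact norm_cpow_mul_inv_cpow_add_le hα hlam hz harg hαθ

theorem abs_im_mittagLefflerIntegrand_mul_self_le (hα : 0 ≤ α) (ht : 0 ≤ t) (hlam : 0 ≤ lam)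
    (hz : z ≠ 0) (harg : |arg z| ≤ θ) (hαθ : α * θ < π) (hre : z.re ≤ 0) :
    |(mittagLefflerIntegrand α t lam z * z).im| ≤
      t * |z.im| * Real.exp (t * z.re) / cos (α * θ / 2) +
        lam * ‖z‖ ^ α / (cos (α * θ / 2) * (‖z‖ ^ α + lam)) ^ 2 := by
  set c := cos (α * θ / 2)
  have hc : 0 < c := cos_mul_div_two_pos hα ((abs_nonneg _).trans harg) hαθ
  have hD : c * (‖z‖ ^ α + lam) ≤ ‖z ^ (α : ℂ) + lam‖ :=
    cos_half_mul_le_norm_cpow_add hα hlam harg hαθ.le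
  have hE : ‖Complex.exp (z * t)‖ ≤ 1 := by
    rw [Complex.norm_exp, Complex.re_mul_ofReal]
    exact Real.exp_le_one_iff.2 (mul_nonpos_of_nonpos_of_nonneg hre ht)
  have hEim : |(Complex.exp (z * t)).im| ≤ t * |z.im| * Real.exp (t * z.re) := by
    have := abs_im_exp_le (z * t)
    rw [Complex.re_mul_ofReal, Complex.im_mul_ofReal, abs_mul, abs_of_nonneg ht] at this
    exact this.trans_eq (by rw [mul_comm z.re]; ring)
  have hR : ‖z ^ (α : ℂ) * (z ^ (α : ℂ) + lam)⁻¹‖ ≤ c⁻¹ := by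
    refine (norm_cpow_mul_inv_cpow_add_le hα hlam hz harg hαθ).trans ?_
    rw [div_le_iff₀ (by positivity), inv_mul_eq_div, mul_div_cancel_left₀ _ hc.ne']
    linarith
  have hRim : |(z ^ (α : ℂ) * (z ^ (α : ℂ) + lam)⁻¹).im| ≤
      lam * ‖z‖ ^ α / (c * (‖z‖ ^ α + lam)) ^ 2 := by
    rw [im_mul_inv_add_ofReal, ← Complex.sq_norm, abs_div, abs_mul, abs_of_nonneg hlam,
      abs_pow, abs_norm]
    gcongr
    · exact (Complex.abs_im_le_norm _).trans_eq (Complex.norm_cpow_real _ _)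
  rw [mittagLefflerIntegrand_mul_self hz]
  calc _ ≤ ‖Complex.exp (z * t)‖ * |(z ^ (α : ℂ) * (z ^ (α : ℂ) + lam)⁻¹).im| +
        |(Complex.exp (z * t)).im| * ‖z ^ (α : ℂ) * (z ^ (α : ℂ) + lam)⁻¹‖ := abs_im_mul_le _ _
    _ ≤ 1 * (lam * ‖z‖ ^ α / (c * (‖z‖ ^ α + lam)) ^ 2) +
        t * |z.im| * Real.exp (t * z.re) * c⁻¹ := by gcongr
    _ = _ := by rw [one_mul, add_comm, div_eq_mul_inv _ c]

end Sector

section Contour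

variable {α θ κ t lam : ℝ}

theorem arg_ofReal_mul_exp_mul_I_of_abs_le {r φ : ℝ} (hr : 0 < r) (hφ : |φ| ≤ θ) (hθ : θ < π) :
    arg (r * Complex.exp (φ * I)) = φ := by
  obtain ⟨h₁, h₂⟩ := abs_le.1 hφ
  exact arg_ofReal_mul_exp_mul_I hr ⟨by linarith, by linarith⟩

theorem mul_norm_mittagLefflerIntegrand_ray_le {r φ : ℝ} (hα : 0 ≤ α) (hlam : 0 ≤ lam)
    (hr : 0 < r) (hφ : |φ| ≤ θ) (hθ : θ < π) (hαθ : α * θ < π) :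
    lam * ‖mittagLefflerIntegrand α t lam (r * Complex.exp (φ * I)) * Complex.exp (φ * I)‖ ≤
      r ^ (α - 1) * Real.exp (t * (r * cos φ)) / cos (α * θ / 2) := by
  set z : ℂ := r * Complex.exp (φ * I)
  have hz : z ≠ 0 := mul_ne_zero (by exact_mod_cast hr.ne') (Complex.exp_ne_zero _)
  have hnorm : ‖z‖ = r := by simp [z, abs_of_pos hr]
  have hre : z.re = r * cos φ := by simp [z, Complex.exp_ofReal_mul_I_re]
  have harg : |arg z| ≤ θ := by rwa [arg_ofReal_mul_exp_mul_I_of_abs_le hr hφ hθ]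
  have hc := cos_mul_div_two_pos hα ((abs_nonneg _).trans harg) hαθ
  have hbound := norm_mittagLefflerIntegrand_mul_self_le (t := t) hα hlam hz harg hαθ
  rw [hnorm, hre] at hbound
  have hfrac : lam / (r ^ α + lam) ≤ 1 :=
    div_le_one_of_le₀ (le_add_of_nonneg_left (by positivity)) (by positivity)
  calc lam * ‖mittagLefflerIntegrand α t lam z * Complex.exp (φ * I)‖
      = lam * ‖mittagLefflerIntegrand α t lam z * z‖ / r := by
        simp only [z, norm_mul, Complex.norm_exp_ofReal_mul_I, Complex.norm_real,
          Real.norm_eq_abs, abs_of_pos hr]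
        field_simp
    _ ≤ lam * (Real.exp (t * (r * cos φ)) * (r ^ α / (cos (α * θ / 2) * (r ^ α + lam)))) / r := by
        gcongr
    _ = Real.exp (t * (r * cos φ)) * (r ^ α / r) / cos (α * θ / 2) * (lam / (r ^ α + lam)) := by
        field_simp
    _ ≤ r ^ (α - 1) * Real.exp (t * (r * cos φ)) / cos (α * θ / 2) := by
        rw [← Real.rpow_sub_one hr.ne', mul_comm (Real.exp _)]
        exact mul_le_of_le_one_right (by positivity) hfrac

theorem abs_im_mittagLefflerIntegrand_ray_le {r φ : ℝ} (hα : 0 ≤ α) (ht : 0 ≤ t)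
    (hlam : 0 ≤ lam) (hr : 0 < r) (hφ : |φ| ≤ θ) (hθ : θ < π) (hαθ : α * θ < π)
    (hcos : cos φ ≤ 0) :
    |(mittagLefflerIntegrand α t lam (r * Complex.exp (φ * I)) * Complex.exp (φ * I)).im| ≤
      t * Real.exp (t * (r * cos φ)) / cos (α * θ / 2) +
        (cos (α * θ / 2) ^ 2)⁻¹ * (lam * r ^ (α - 1) / (r ^ α + lam) ^ 2) := by
  set z : ℂ := r * Complex.exp (φ * I)
  have hz : z ≠ 0 := mul_ne_zero (by exact_mod_cast hr.ne') (Complex.exp_ne_zero _)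
  have hnorm : ‖z‖ = r := by simp [z, abs_of_pos hr]
  have hre : z.re = r * cos φ := by simp [z, Complex.exp_ofReal_mul_I_re]
  have him : |z.im| ≤ r := by
    simpa [z, Complex.exp_ofReal_mul_I_im, abs_mul, abs_of_pos hr] using
      mul_le_mul_of_nonneg_left (abs_sin_le_one φ) hr.le
  have harg : |arg z| ≤ θ := by rwa [arg_ofReal_mul_exp_mul_I_of_abs_le hr hφ hθ]
  have hc := cos_mul_div_two_pos hα ((abs_nonneg _).trans harg) hαθ
  have hbound := abs_im_mittagLefflerIntegrand_mul_self_le hα ht hlam hz harg hαθ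
    (by rw [hre]; exact mul_nonpos_of_nonneg_of_nonpos hr.le hcos)
  rw [hnorm, hre] at hbound
  have hdiv : mittagLefflerIntegrand α t lam z * Complex.exp (φ * I) =
      mittagLefflerIntegrand α t lam z * z / r := by
    have : (r : ℂ) ≠ 0 := by exact_mod_cast hr.ne'
    simp only [z]
    field_simp
  rw [hdiv, Complex.div_ofReal_im, abs_div, abs_of_pos hr, div_le_iff₀ hr]
  calc _ ≤ t * r * Real.exp (t * (r * cos φ)) / cos (α * θ / 2) +
        lam * r ^ α / (cos (α * θ / 2) * (r ^ α + lam)) ^ 2 := by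
        refine hbound.trans ?_
        gcongr
    _ = _ := by
        rw [Real.rpow_sub_one hr.ne']
        field_simp

theorem norm_mittagLefflerIntegrand_arc_le {ψ : ℝ} (hα : 0 ≤ α) (ht : 0 ≤ t) (hlam : 0 ≤ lam)
    (hκ : 0 < κ) (hψ : |ψ| ≤ θ) (hθ : θ < π) (hαθ : α * θ < π) :
    ‖mittagLefflerIntegrand α t lam (κ * Complex.exp (ψ * I)) * (I * κ * Complex.exp (ψ * I))‖ ≤
      Real.exp (t * κ) * (κ ^ α / (cos (α * θ / 2) * (κ ^ α + lam))) := by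
  set z : ℂ := κ * Complex.exp (ψ * I)
  have hz : z ≠ 0 := mul_ne_zero (by exact_mod_cast hκ.ne') (Complex.exp_ne_zero _)
  have hnorm : ‖z‖ = κ := by simp [z, abs_of_pos hκ]
  have hre : z.re ≤ κ := by
    simpa [z, Complex.exp_ofReal_mul_I_re] using mul_le_of_le_one_right hκ.le (cos_le_one ψ)
  have harg : |arg z| ≤ θ := by rwa [arg_ofReal_mul_exp_mul_I_of_abs_le hκ hψ hθ]
  have hc := cos_mul_div_two_pos hα ((abs_nonneg _).trans harg) hαθ
  have hbound := norm_mittagLefflerIntegrand_mul_self_le (t := t) hα hlam hz harg hαθ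
  rw [hnorm] at hbound
  calc ‖mittagLefflerIntegrand α t lam z * (I * κ * Complex.exp (ψ * I))‖
      = ‖mittagLefflerIntegrand α t lam z * z‖ := by
        rw [mul_assoc I, mul_left_comm, norm_mul, Complex.norm_I, one_mul]
    _ ≤ _ := hbound.trans (by gcongr)

theorem norm_arcIntegral_le (hα : 0 ≤ α) (ht : 0 ≤ t) (hlam : 0 ≤ lam) (hκ : 0 < κ)
    (hθ : θ ∈ Ioo 0 π) (hαθ : α * θ < π) :
    ‖arcIntegral θ κ (mittagLefflerIntegrand α t lam)‖ ≤
      Real.exp (t * κ) * (κ ^ α / (cos (α * θ / 2) * (κ ^ α + lam))) * (2 * θ) := by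
  have hle := intervalIntegral.norm_integral_le_of_norm_le_const (a := -θ) (b := θ)
    (f := fun ψ : ℝ => mittagLefflerIntegrand α t lam (κ * Complex.exp (ψ * I)) *
      (I * κ * Complex.exp (ψ * I)))
    (C := Real.exp (t * κ) * (κ ^ α / (cos (α * θ / 2) * (κ ^ α + lam)))) fun ψ hψ => by
      rw [uIoc_of_le (by linarith [hθ.1])] at hψ
      exact norm_mittagLefflerIntegrand_arc_le hα ht hlam hκ (abs_le.2 ⟨hψ.1.le, hψ.2⟩) hθ.2 hαθ
  rwa [show θ - -θ = 2 * θ by ring, abs_of_pos (by linarith [hθ.1])] at hle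

theorem mul_norm_rayIntegral_le {φ : ℝ} (hα : 0 < α) (ht : 0 < t) (hlam : 0 ≤ lam)
    (hκ : 0 ≤ κ) (hθ : θ ∈ Ioo (π / 2) π) (hαθ : α * θ < π) (hφ : |φ| = θ) :
    lam * ‖rayIntegral φ κ (mittagLefflerIntegrand α t lam)‖ ≤
      (1 / (t * -cos θ)) ^ α * Gamma α / cos (α * θ / 2) := by
  have hb : 0 < t * -cos θ :=
    mul_pos ht (neg_pos.2 (cos_neg_of_pi_div_two_lt_of_lt hθ.1 (by linarith [hθ.2, pi_pos])))
  have hcos : cos φ = cos θ := by rw [← hφ, cos_abs]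
  have hint := ((integrableOn_Ioi_rpow_mul_exp_neg_mul hα hb).mono_set
    (Ioi_subset_Ioi hκ)).div_const (cos (α * θ / 2))
  have hsmul (w : ℂ) : lam * ‖w‖ = ‖(lam : ℂ) • w‖ := by
    rw [norm_smul, Complex.norm_real, Real.norm_of_nonneg hlam]
  rw [hsmul, rayIntegral, ← integral_smul]
  refine (norm_integral_le_of_norm_le hint ?_).trans ?_
  · filter_upwards [ae_restrict_mem measurableSet_Ioi] with r (hr : κ < r)
    rw [← hsmul]
    convert mul_norm_mittagLefflerIntegrand_ray_le (t := t) hα.le hlam (hκ.trans_lt hr)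
      hφ.le hθ.2 hαθ using 3
    rw [hcos]; congr 1; ring
  · rw [integral_div]
    gcongr
    · exact (cos_mul_div_two_pos hα.le (by linarith [pi_pos, hθ.1]) hαθ).le
    · exact setIntegral_Ioi_rpow_mul_exp_neg_mul_le hα hb hκ

theorem norm_rayIntegral_sub_rayIntegral_neg_le (hα : 0 < α) (ht : 0 < t) (hlam : 0 ≤ lam)
    (hκ : 0 < κ) (hθ : θ ∈ Ioo (π / 2) π) (hαθ : α * θ < π) :
    ‖rayIntegral θ κ (mittagLefflerIntegrand α t lam) -
        rayIntegral (-θ) κ (mittagLefflerIntegrand α t lam)‖ ≤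
      2 * ((-cos θ)⁻¹ / cos (α * θ / 2) + (cos (α * θ / 2) ^ 2)⁻¹ * α⁻¹) := by
  have hθ₀ : 0 < θ := by linarith [pi_pos, hθ.1]
  have hθθ : |θ| ≤ θ := (abs_of_pos hθ₀).le
  have hcos : t * cos θ < 0 :=
    mul_neg_of_pos_of_neg ht (cos_neg_of_pi_div_two_lt_of_lt hθ.1 (by linarith [hθ.2, pi_pos]))
  set c := cos (α * θ / 2)
  have hc : 0 < c := cos_mul_div_two_pos hα.le hθ₀.le hαθ
  have hconj : rayIntegral (-θ) κ (mittagLefflerIntegrand α t lam) =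
      conj (rayIntegral θ κ (mittagLefflerIntegrand α t lam)) :=
    rayIntegral_neg_of_conj fun r hr => mittagLefflerIntegrand_conj <| by
      rw [arg_ofReal_mul_exp_mul_I_of_abs_le (hκ.trans hr) hθθ hθ.2]; exact hθ.2.ne
  have hint : IntegrableOn (fun r : ℝ => t * Real.exp (t * cos θ * r) / c +
      (c ^ 2)⁻¹ * (lam * r ^ (α - 1) / (r ^ α + lam) ^ 2)) (Ioi κ) :=
    (((integrableOn_exp_mul_Ioi hcos κ).const_mul t).div_const c).add
      ((integrableOn_Ioi_mul_rpow_div_rpow_add_sq hα hlam hκ).const_mul _)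
  rw [hconj, Complex.sub_conj, norm_mul, Complex.norm_I, mul_one, Complex.norm_real,
    Real.norm_eq_abs, abs_mul, abs_two]
  gcongr
  refine (abs_im_integral_le hint ?_).trans ?_
  · filter_upwards [ae_restrict_mem measurableSet_Ioi] with r (hr : κ < r)
    convert abs_im_mittagLefflerIntegrand_ray_le hα.le ht.le hlam (hκ.trans hr) hθθ hθ.2 hαθ
      (by nlinarith) using 4
    congr 1
    ring
  · rw [integral_add (((integrableOn_exp_mul_Ioi hcos κ).const_mul t).div_const c)
      ((integrableOn_Ioi_mul_rpow_div_rpow_add_sq hα hlam hκ).const_mul _), integral_div,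
      integral_const_mul, integral_const_mul]
    calc _ ≤ t * (-(t * cos θ))⁻¹ / c + (c ^ 2)⁻¹ * α⁻¹ := by
          gcongr
          · exact setIntegral_Ioi_exp_mul_le hcos hκ.le
          · exact setIntegral_Ioi_mul_rpow_div_rpow_add_sq_le hα hlam hκ
      _ = _ := by
          rw [← mul_neg, mul_inv, ← mul_assoc, mul_inv_cancel₀ ht.ne', one_mul]

theorem norm_contourIntegral_mittagLefflerIntegrand_le (T : ℝ) (hα : 0 < α)
    (hθ : θ ∈ Ioo (π / 2) π) (hαθ : α * θ < π) (hκ : 0 < κ) :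
    ∃ C, 0 < C ∧ ∀ t ∈ Ioc 0 T, ∀ lam : ℝ, 0 ≤ lam →
      ‖contourIntegral θ κ (mittagLefflerIntegrand α t lam)‖ ≤ C := by
  have hθ₀ : 0 < θ := by linarith [pi_pos, hθ.1]
  have hcosθ : 0 < -cos θ :=
    neg_pos.2 (cos_neg_of_pi_div_two_lt_of_lt hθ.1 (by linarith [hθ.2, pi_pos]))
  set c := cos (α * θ / 2)
  have hc : 0 < c := cos_mul_div_two_pos hα.le hθ₀.le hαθ
  refine ⟨2 * ((-cos θ)⁻¹ / c + (c ^ 2)⁻¹ * α⁻¹) + Real.exp (T * κ) * c⁻¹ * (2 * θ),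
    by positivity, fun t ⟨ht, htT⟩ lam hlam => ?_⟩
  have hfrac : κ ^ α / (c * (κ ^ α + lam)) ≤ c⁻¹ := by
    rw [mul_comm, ← div_div, ← one_div]
    exact div_le_div_of_nonneg_right
      (div_le_one_of_le₀ (le_add_of_nonneg_right hlam) (by positivity)) hc.le
  rw [contourIntegral_eq_rayIntegral_sub_add_arcIntegral]
  refine (norm_add_le _ _).trans (add_le_add
    (norm_rayIntegral_sub_rayIntegral_neg_le hα ht hlam hκ hθ hαθ) ?_)
  refine (norm_arcIntegral_le hα.le ht.le hlam hκ ⟨hθ₀, hθ.2⟩ hαθ).trans ?_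
  gcongr

theorem mul_norm_arcIntegral_le (hα : 0 ≤ α) (ht : 0 ≤ t) (hlam : 0 ≤ lam) (hκ : 0 < κ)
    (hθ : θ ∈ Ioo 0 π) (hαθ : α * θ < π) :
    lam * ‖arcIntegral θ κ (mittagLefflerIntegrand α t lam)‖ ≤
      Real.exp (t * κ) * κ ^ α / cos (α * θ / 2) * (2 * θ) := by
  have hc := cos_mul_div_two_pos hα hθ.1.le hαθ
  have hfrac : lam / (κ ^ α + lam) ≤ 1 :=
    div_le_one_of_le₀ (le_add_of_nonneg_left (by positivity)) (by positivity)
  calc lam * ‖arcIntegral θ κ (mittagLefflerIntegrand α t lam)‖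
      ≤ lam * (Real.exp (t * κ) * (κ ^ α / (cos (α * θ / 2) * (κ ^ α + lam))) * (2 * θ)) :=
        mul_le_mul_of_nonneg_left (norm_arcIntegral_le hα ht hlam hκ hθ hαθ) hlam
    _ = Real.exp (t * κ) * κ ^ α / cos (α * θ / 2) * (2 * θ) * (lam / (κ ^ α + lam)) := by
        field_simp
    _ ≤ Real.exp (t * κ) * κ ^ α / cos (α * θ / 2) * (2 * θ) :=
        mul_le_of_le_one_right (by have := hθ.1; positivity) hfrac

theorem mul_norm_contourIntegral_mittagLefflerIntegrand_le {T : ℝ} (hT : 0 < T) (hα : 0 < α)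
    (hθ : θ ∈ Ioo (π / 2) π) (hαθ : α * θ < π) (hκ : 0 < κ) :
    ∃ C, 0 < C ∧ ∀ t ∈ Ioc 0 T, ∀ lam : ℝ, 0 ≤ lam →
      lam * ‖contourIntegral θ κ (mittagLefflerIntegrand α t lam)‖ ≤ C * t ^ (-α) := by
  have hθ₀ : 0 < θ := by linarith [pi_pos, hθ.1]
  have hcosθ : 0 < -cos θ :=
    neg_pos.2 (cos_neg_of_pi_div_two_lt_of_lt hθ.1 (by linarith [hθ.2, pi_pos]))
  set c := cos (α * θ / 2)
  have hc : 0 < c := cos_mul_div_two_pos hα.le hθ₀.le hαθ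
  set C_ray := (-cos θ) ^ (-α) * Gamma α / c with hC_ray
  set C_arc := Real.exp (T * κ) * κ ^ α / c * (2 * θ) * T ^ α with hC_arc
  refine ⟨2 * C_ray + C_arc, by positivity, fun t ⟨ht, htT⟩ lam hlam => ?_⟩
  have hray {φ : ℝ} (hφ : |φ| = θ) :
      lam * ‖rayIntegral φ κ (mittagLefflerIntegrand α t lam)‖ ≤ C_ray * t ^ (-α) := by
    refine (mul_norm_rayIntegral_le hα ht hlam hκ.le hθ hαθ hφ).trans_eq ?_
    rw [hC_ray, one_div, Real.inv_rpow (by positivity), Real.mul_rpow ht.le hcosθ.le, mul_inv,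
      ← Real.rpow_neg ht.le, ← Real.rpow_neg hcosθ.le]
    ring
  have harc : lam * ‖arcIntegral θ κ (mittagLefflerIntegrand α t lam)‖ ≤ C_arc * t ^ (-α) := by
    have hTt : 1 ≤ T ^ α * t ^ (-α) := by
      rw [Real.rpow_neg ht.le, ← div_eq_mul_inv, one_le_div (by positivity)]
      exact Real.rpow_le_rpow ht.le htT hα.le
    calc _ ≤ Real.exp (t * κ) * κ ^ α / c * (2 * θ) * 1 :=
          (mul_norm_arcIntegral_le hα.le ht.le hlam hκ ⟨hθ₀, hθ.2⟩ hαθ).trans_eq (mul_one _).symm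
      _ ≤ Real.exp (T * κ) * κ ^ α / c * (2 * θ) * (T ^ α * t ^ (-α)) := by gcongr
      _ = C_arc * t ^ (-α) := by rw [hC_arc]; ring
  rw [contourIntegral_eq_rayIntegral_sub_add_arcIntegral]
  calc _ ≤ lam * ‖rayIntegral θ κ (mittagLefflerIntegrand α t lam)‖ +
        lam * ‖rayIntegral (-θ) κ (mittagLefflerIntegrand α t lam)‖ +
        lam * ‖arcIntegral θ κ (mittagLefflerIntegrand α t lam)‖ := by
        rw [← mul_add, ← mul_add]
        gcongr
        exact (norm_add_le _ _).trans (by gcongr; exact norm_sub_le _ _)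
    _ ≤ C_ray * t ^ (-α) + C_ray * t ^ (-α) + C_arc * t ^ (-α) :=
        add_le_add (add_le_add (hray (abs_of_pos hθ₀)) (hray (by rw [abs_neg, abs_of_pos hθ₀])))
          harc
    _ = (2 * C_ray + C_arc) * t ^ (-α) := by ring

end Contour

theorem rpow_mul_le_of_le_of_mul_le {x a M N σ : ℝ} (hx : 0 ≤ x) (ha : 0 ≤ a) (haM : a ≤ M)
    (hxa : x * a ≤ N) (hσ : σ ∈ Icc 0 1) : x ^ σ * a ≤ N ^ σ * M ^ (1 - σ) := by
  have hN : 0 ≤ N := (mul_nonneg hx ha).trans hxa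
  rcases ha.eq_or_lt with rfl | ha
  · rw [mul_zero]
    exact mul_nonneg (Real.rpow_nonneg hN _) (Real.rpow_nonneg haM _)
  calc x ^ σ * a = (x * a) ^ σ * a ^ (1 - σ) := by
        rw [Real.mul_rpow hx ha.le, mul_assoc, ← Real.rpow_add ha, add_sub_cancel, Real.rpow_one]
    _ ≤ N ^ σ * M ^ (1 - σ) := by
        gcongr
        · exact hσ.1
        · linarith [hσ.2]

/-- Scalar (spectral) form of the solution-operator smoothing estimate
`‖A^σ E(t)‖ ≤ C t^{-σα}` underlying Theorem 1: for `α ∈ (0,1)`, `θ ∈ (π/2,π)` with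
`αθ < π`, `κ > 0`, `T > 0`, `σ ∈ [0,1]`, there is `C > 0` with
`λ^σ |(1/(2πi)) ∫_{Γ_{θ,κ}} e^{zt} z^{α-1} (z^α+λ)⁻¹ dz| ≤ C t^{-σα}`
for all `t ∈ (0,T]` and all `λ ≥ 0`. -/
theorem scalar_solution_operator_smoothing
    (α θ κ T σ : ℝ) (hα : α ∈ Set.Ioo (0:ℝ) 1)
    (hθ : θ ∈ Set.Ioo (Real.pi / 2) Real.pi) (hαθ : α * θ < Real.pi)
    (hκ : 0 < κ) (hT : 0 < T) (hσ : σ ∈ Set.Icc (0:ℝ) 1) :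
    ∃ C : ℝ, 0 < C ∧
      ∀ t ∈ Set.Ioc (0:ℝ) T, ∀ lam : ℝ, 0 ≤ lam →
        lam ^ σ * ‖
          ((2 * (Real.pi : ℂ) * Complex.I)⁻¹ *
            contourIntegral θ κ (fun z =>
              Complex.exp (z * (t : ℂ)) * z ^ ((α : ℂ) - 1) *
                (z ^ (α : ℂ) + (lam : ℂ))⁻¹))‖
          ≤ C * t ^ (-σ * α) := by
  obtain ⟨C₁, hC₁, hbound⟩ := norm_contourIntegral_mittagLefflerIntegrand_le T hα.1 hθ hαθ hκ
  obtain ⟨C₂, hC₂, hweighted⟩ :=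
    mul_norm_contourIntegral_mittagLefflerIntegrand_le hT hα.1 hθ hαθ hκ
  refine ⟨(2 * π)⁻¹ * (C₂ ^ σ * C₁ ^ (1 - σ)), by positivity, fun t ht lam hlam => ?_⟩
  have hnorm : ‖(2 * (π : ℂ) * I)⁻¹‖ = (2 * π)⁻¹ := by simp [pi_pos.le]
  have hinterp := rpow_mul_le_of_le_of_mul_le hlam (norm_nonneg _) (hbound t ht lam hlam)
    (hweighted t ht lam hlam) hσ
  rw [Real.mul_rpow hC₂.le (Real.rpow_nonneg ht.1.le _), ← Real.rpow_mul ht.1.le] at hinterp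
  rw [norm_mul, hnorm]
  calc lam ^ σ * ((2 * π)⁻¹ * ‖contourIntegral θ κ (mittagLefflerIntegrand α t lam)‖)
      = (2 * π)⁻¹ * (lam ^ σ * ‖contourIntegral θ κ (mittagLefflerIntegrand α t lam)‖) := by ring
    _ ≤ (2 * π)⁻¹ * (C₂ ^ σ * t ^ (-α * σ) * C₁ ^ (1 - σ)) := by gcongr
    _ = (2 * π)⁻¹ * (C₂ ^ σ * C₁ ^ (1 - σ)) * t ^ (-σ * α) := by
        rw [show -α * σ = -σ * α by ring]; ring
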